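/- arXiv:math-ph/0403024 — 5 statements merged into one kernel-verified Lean document; each statement's English description precedes it below -/
import Mathlib

section
/- Let A be a unital C*-algebra, H a complex Hilbert space, and α : A → B(H) a unital positive linear map. Then for every a ∈ A one has the operator inequality α(a)α(a*) + α(a*)α(a) ≤ α(a*a + aa*) in B(H) (i.e. the difference α(a*a + aa*) − α(a)α(a*) − α(a*)α(a) is a positive operator). -/
/-!
Writing `a = x + i y` with `x, y` self-adjoint, both sides of the inequality are twice
`α x ^ 2 + α y ^ 2` and `α (x ^ 2) + α (y ^ 2)` respectively, so it suffices to prove Kadison's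
inequality `α x ^ 2 ≤ α (x ^ 2)` for self-adjoint `x`. The defect `α (x ^ 2) - α x ^ 2` only gets
multiplied by `c ^ 2` under `x ↦ c (r + x)`, so we may assume `0 ≤ x ≤ 1`. Then the Bernstein
elements `b_k = (n choose k) x ^ k (1 - x) ^ (n - k)` are positive, sum to `1`, and satisfy
`∑ (k / n) b_k = x` and `∑ (k / n) ^ 2 b_k = x ^ 2 + (x - x ^ 2) / n`. Their images `P_k = α b_k`
are positive operators summing to `1`, and for such a family, with `S = ∑ t_k P_k`,
`∑ t_k ^ 2 P_k - S ^ 2 = ∑ (t_k - S)⋆ P_k (t_k - S) ≥ 0`. This gives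
`α x ^ 2 ≤ α (x ^ 2) + α (x - x ^ 2) / n`, and we let `n → ∞`.
-/

open Polynomial

section StarOrderedRing

variable {R : Type*} [Ring R] [StarRing R] [PartialOrder R] [StarOrderedRing R] [Algebra ℝ R]
  [StarModule ℝ R]

theorem sum_smul_mul_sum_smul_le {ι : Type*} (s : Finset ι) (t : ι → ℝ) (P : ι → R)
    (hP : ∀ i ∈ s, 0 ≤ P i) (hsum : ∑ i ∈ s, P i = 1) :
    (∑ i ∈ s, t i • P i) * (∑ i ∈ s, t i • P i) ≤ ∑ i ∈ s, t i ^ 2 • P i := by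
  set S := ∑ i ∈ s, t i • P i
  have term (i : ι) : star (t i • 1 - S) * P i * (t i • 1 - S)
      = t i ^ 2 • P i - t i • P i * S - star S * (t i • P i) + star S * P i * S := by
    simp only [star_sub, star_smul, star_trivial, star_one, sub_mul, mul_sub, smul_mul_assoc,
      mul_smul_comm, one_mul, mul_one]
    module
  have key : ∑ i ∈ s, star (t i • 1 - S) * P i * (t i • 1 - S)
      = ∑ i ∈ s, t i ^ 2 • P i - S * S := by
    simp only [term, Finset.sum_add_distrib, Finset.sum_sub_distrib, ← Finset.mul_sum,
      ← Finset.sum_mul, hsum, mul_one]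
    abel
  rw [← sub_nonneg, ← key]
  exact Finset.sum_nonneg fun i hi => star_left_conjugate_nonneg (hP i hi) _

end StarOrderedRing

namespace bernsteinPolynomial

theorem sum_div_smul {n : ℕ} (hn : n ≠ 0) :
    ∑ k ∈ Finset.range (n + 1), ((k : ℝ) / n) • bernsteinPolynomial ℝ n k = X := by
  have h := sum_smul ℝ n
  simp only [← Nat.cast_smul_eq_nsmul ℝ] at h
  simp_rw [div_eq_inv_mul, ← smul_smul, ← Finset.smul_sum, h, smul_smul]
  rw [inv_mul_cancel₀ (Nat.cast_ne_zero.2 hn), one_smul]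

theorem sum_div_sq_smul {n : ℕ} (hn : n ≠ 0) :
    ∑ k ∈ Finset.range (n + 1), ((k : ℝ) / n) ^ 2 • bernsteinPolynomial ℝ n k
      = X ^ 2 + (n : ℝ)⁻¹ • (X - X ^ 2) := by
  have h1 := sum_smul ℝ n
  have h2 := sum_mul_smul ℝ n
  have hsq (k : ℕ) : ((k : ℝ) / n) ^ 2 = ((n : ℝ) ^ 2)⁻¹ * (((k * (k - 1) : ℕ) : ℝ) + k) := by
    rcases k with _ | k <;> push_cast <;> ring
  simp only [← Nat.cast_smul_eq_nsmul ℝ] at h1 h2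
  simp_rw [hsq, ← smul_smul, add_smul, smul_add, Finset.sum_add_distrib, ← Finset.smul_sum, h1,
    h2]
  have hn' : (n : ℝ) ≠ 0 := Nat.cast_ne_zero.2 hn
  rw [Nat.cast_mul, Nat.cast_pred (Nat.pos_of_ne_zero hn)]
  match_scalars
  · field_simp
    ring
  · field_simp

end bernsteinPolynomial

open Filter Topology

section CStarAlgebra

variable {A B : Type*} [CStarAlgebra A] [PartialOrder A] [StarOrderedRing A]
  [CStarAlgebra B] [PartialOrder B] [StarOrderedRing B]

theorem aeval_bernsteinPolynomial_nonneg {y : A} (h₀ : 0 ≤ y) (h₁ : y ≤ 1) (n k : ℕ) :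
    0 ≤ aeval y (bernsteinPolynomial ℝ n k) := by
  have hcomm : Commute (y ^ k) ((1 - y) ^ (n - k)) :=
    ((Commute.one_right y).sub_right (Commute.refl y)).pow_pow _ _
  simp only [bernsteinPolynomial, map_mul, map_pow, map_sub, map_one, aeval_X, map_natCast]
  rw [mul_assoc, ← nsmul_eq_mul]
  exact nsmul_nonneg (hcomm.mul_nonneg (CStarAlgebra.pow_nonneg h₀ _)
    (CStarAlgebra.pow_nonneg (sub_nonneg.2 h₁) _)) _

variable (α : A →ₗ[ℂ] B)

theorem map_mul_self_le_add_smul_of_nonneg_of_le_one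
    (h_unital : α 1 = 1) (h_pos : ∀ a : A, 0 ≤ a → 0 ≤ α a)
    {y : A} (h₀ : 0 ≤ y) (h₁ : y ≤ 1) {n : ℕ} (hn : n ≠ 0) :
    α y * α y ≤ α (y * y) + (n : ℝ)⁻¹ • α (y - y * y) := by
  let φ : ℝ[X] →ₗ[ℝ] B := α.restrictScalars ℝ ∘ₗ (aeval y).toLinearMap
  have h := sum_smul_mul_sum_smul_le (Finset.range (n + 1)) (fun k => (k : ℝ) / n)
    (fun k => φ (bernsteinPolynomial ℝ n k))
    (fun k _ => h_pos _ (aeval_bernsteinPolynomial_nonneg h₀ h₁ n k))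
    (by simp [φ, ← map_sum, bernsteinPolynomial.sum, h_unital])
  simp_rw [← map_smul, ← map_sum, bernsteinPolynomial.sum_div_smul hn,
    bernsteinPolynomial.sum_div_sq_smul hn] at h
  simpa [φ, sq] using h

theorem map_mul_self_le_of_nonneg_of_le_one
    (h_unital : α 1 = 1) (h_pos : ∀ a : A, 0 ≤ a → 0 ≤ α a)
    {y : A} (h₀ : 0 ≤ y) (h₁ : y ≤ 1) : α y * α y ≤ α (y * y) := by
  have hlim : Tendsto (fun n : ℕ => α (y * y) + (n : ℝ)⁻¹ • α (y - y * y)) atTop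
      (𝓝 (α (y * y))) := by
    simpa using tendsto_const_nhds.add
      ((tendsto_inv_atTop_nhds_zero_nat (𝕜 := ℝ)).smul_const (α (y - y * y)))
  exact ge_of_tendsto hlim ((eventually_ne_atTop 0).mono fun n hn =>
    map_mul_self_le_add_smul_of_nonneg_of_le_one α h_unital h_pos h₀ h₁ hn)

theorem map_mul_self_le_of_isSelfAdjoint
    (h_unital : α 1 = 1) (h_pos : ∀ a : A, 0 ≤ a → 0 ≤ α a)
    {x : A} (hx : IsSelfAdjoint x) : α x * α x ≤ α (x * x) := by
  set r := ‖x‖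
  set c := (2 * r + 1)⁻¹
  have hc : 0 < c := by positivity
  set y := c • (algebraMap ℝ A r + x)
  have h₀ : 0 ≤ y := smul_nonneg hc.le (neg_le_iff_add_nonneg'.1 hx.neg_algebraMap_norm_le_self)
  have h₁ : y ≤ 1 := by
    have : algebraMap ℝ A r + x ≤ algebraMap ℝ A (2 * r + 1) := by
      rw [show 2 * r + 1 = r + (r + 1) by ring, map_add]
      gcongr
      exact hx.le_algebraMap_norm_self.trans (algebraMap_mono A (by linarith))
    calc y ≤ c • algebraMap ℝ A (2 * r + 1) := smul_le_smul_of_nonneg_left this hc.le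
      _ = 1 := by
        rw [Algebra.algebraMap_eq_smul_one, smul_smul, inv_mul_cancel₀ (by positivity), one_smul]
  have hdefect : α (y * y) - α y * α y = c ^ 2 • (α (x * x) - α x * α x) := by
    simp only [y, Algebra.algebraMap_eq_smul_one, map_add, LinearMap.map_smul_of_tower,
      h_unital, smul_add, add_mul, mul_add, smul_mul_assoc, mul_smul_comm, one_mul, mul_one]
    module
  have hy := sub_nonneg.2 (map_mul_self_le_of_nonneg_of_le_one α h_unital h_pos h₀ h₁)
  rw [hdefect] at hy
  rw [← sub_nonneg, ← inv_smul_smul₀ (pow_ne_zero 2 hc.ne') (α (x * x) - α x * α x)]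
  exact smul_nonneg (by positivity) hy

end CStarAlgebra

open Complex in
theorem add_I_smul_mul_sub_I_smul_add_swap {R : Type*} [Ring R] [Algebra ℂ R] (x y : R) :
    (x + I • y) * (x - I • y) + (x - I • y) * (x + I • y) = (2 : ℝ) • (x * x + y * y) := by
  simp only [add_mul, mul_add, sub_mul, mul_sub, smul_mul_assoc, mul_smul_comm]
  match_scalars <;> simp <;> ring

open Complex in
/-- Kadison–Schwarz-type inequality (Størmer's Lemma 7.3): if `α` is a unital positive
linear map from a unital C*-algebra `A` into `B(H)`, then for every `a ∈ A`,
`α(a)α(a*) + α(a*)α(a) ≤ α(a*a + aa*)` in the Loewner order on `B(H)`. -/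
theorem stmt2
    {A : Type*} [NormedRing A] [StarRing A] [CStarRing A] [NormedAlgebra ℂ A]
    [CompleteSpace A] [PartialOrder A] [StarOrderedRing A] [StarModule ℂ A]
    {H : Type*} [NormedAddCommGroup H] [InnerProductSpace ℂ H] [CompleteSpace H]
    (α : A →ₗ[ℂ] (H →L[ℂ] H))
    (h_unital : α 1 = 1)
    (h_pos : ∀ a : A, 0 ≤ a → 0 ≤ α a)
    (a : A) :
    α a * α (star a) + α (star a) * α a ≤ α (star a * a + a * star a) := by
  let _ : CStarAlgebra A := {}
  obtain ⟨x, y, hx, hy, rfl⟩ : ∃ x y : A, IsSelfAdjoint x ∧ IsSelfAdjoint y ∧ a = x + I • y :=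
    ⟨_, _, (realPart a).2, (imaginaryPart a).2, (realPart_add_I_smul_imaginaryPart a).symm⟩
  have hstar : star (x + I • y) = x - I • y := by
    rw [star_add, star_smul, hx.star_eq, hy.star_eq, Complex.star_def, conj_I, neg_smul,
      sub_eq_add_neg]
  calc α (x + I • y) * α (star (x + I • y)) + α (star (x + I • y)) * α (x + I • y)
      = (2 : ℝ) • (α x * α x + α y * α y) := by
        rw [hstar, map_add, map_sub, map_smul, add_I_smul_mul_sub_I_smul_add_swap]
    _ ≤ (2 : ℝ) • (α (x * x) + α (y * y)) := by
        gcongr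
        · exact map_mul_self_le_of_isSelfAdjoint α h_unital h_pos hx
        · exact map_mul_self_le_of_isSelfAdjoint α h_unital h_pos hy
    _ = α (star (x + I • y) * (x + I • y) + (x + I • y) * star (x + I • y)) := by
        rw [hstar, add_comm ((x - I • y) * _), add_I_smul_mul_sub_I_smul_add_swap,
          LinearMap.map_smul_of_tower, map_add]
end

section
/- Let A be a unital C*-algebra, K a complex Hilbert space, α : A → B(K) a unital positive linear map, and ξ ∈ K. If a ∈ A is self-adjoint and ⟨ξ, α(a²)ξ⟩ = 0, then α(a)ξ = 0. -/
open scoped ComplexInnerProductSpace ComplexOrder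

/-!
For a positive functional `φ` and self-adjoint `b`, positivity of `φ ((b - s) ^ 2)` for every
real `s` is a quadratic inequality in `s`, whose discriminant gives
`(re φ b) ^ 2 ≤ re φ 1 * re φ (b ^ 2)`. Writing `a = a⁺ - a⁻` with `a ^ 2 = a⁺ ^ 2 + a⁻ ^ 2`,
both `⟪ξ, α (a⁺ ^ 2) ξ⟫` and `⟪ξ, α (a⁻ ^ 2) ξ⟫` vanish, so the bound applied to
`φ = ⟪ξ, α (·) ξ⟫` gives `⟪ξ, α (a^±) ξ⟫ = 0`. Finally a positive operator `T = S⋆ S` with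
`⟪ξ, T ξ⟫ = ‖S ξ‖ ^ 2 = 0` kills `ξ`.
-/

theorem sq_sub_eq_sq_add_sq_of_mul_eq_zero {R : Type*} [Ring R] {p n : R}
    (hpn : p * n = 0) (hnp : n * p = 0) : (p - n) ^ 2 = p ^ 2 + n ^ 2 := by
  simp only [sq, sub_mul, mul_sub, hpn, hnp]
  abel

theorem ContinuousLinearMap.apply_eq_zero_of_inner_apply_self_eq_zero
    {K : Type*} [NormedAddCommGroup K] [InnerProductSpace ℂ K] [CompleteSpace K]
    {T : K →L[ℂ] K} (hT : 0 ≤ T) {x : K} (h : ⟪x, T x⟫ = 0) : T x = 0 := by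
  obtain ⟨S, rfl⟩ := CStarAlgebra.nonneg_iff_eq_star_mul_self.mp hT
  have hSx : S x = 0 := by
    rwa [mul_apply_eq_comp, star_eq_adjoint, adjoint_inner_right, inner_self_eq_zero] at h
  rw [mul_apply_eq_comp, hSx, map_zero]

section PositiveMap

variable {A : Type*} [Ring A] [StarRing A] [PartialOrder A] [StarOrderedRing A] [Algebra ℂ A]
  [StarModule ℂ A]

theorem sq_re_apply_le_re_apply_one_mul_re_apply_sq
    (φ : A →ₗ[ℂ] ℂ) (hφ : ∀ x, 0 ≤ x → 0 ≤ φ x) {b : A} (hb : IsSelfAdjoint b) :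
    (φ b).re ^ 2 ≤ (φ 1).re * (φ (b ^ 2)).re := by
  have hquad : ∀ s : ℝ, 0 ≤ (φ 1).re * (s * s) + (-2 * (φ b).re) * s + (φ (b ^ 2)).re := by
    intro s
    have hsa : IsSelfAdjoint (b - (s : ℂ) • 1) :=
      hb.sub (.smul (Complex.conj_ofReal s) (.one A))
    have h := Complex.nonneg_iff.mp (hφ _ hsa.sq_nonneg) |>.1
    have hexp : (b - (s : ℂ) • 1) ^ 2 = b ^ 2 - (2 * s : ℂ) • b + (s * s : ℂ) • 1 := by
      simp only [sq, sub_mul, mul_sub, smul_mul_assoc, mul_smul_comm, one_mul, mul_one]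
      module
    rw [hexp] at h
    simp only [map_add, map_sub, map_smul, smul_eq_mul, Complex.add_re, Complex.sub_re,
      Complex.mul_re, Complex.re_ofNat, Complex.ofReal_re, Complex.im_ofNat, Complex.ofReal_im,
      mul_zero, sub_zero, Complex.mul_im, zero_mul, add_zero] at h
    linarith
  have := discrim_le_zero hquad
  unfold discrim at this
  linarith

theorem map_apply_eq_zero_of_re_inner_map_sq_nonpos
    {K : Type*} [NormedAddCommGroup K] [InnerProductSpace ℂ K] [CompleteSpace K]
    (α : A →ₗ[ℂ] (K →L[ℂ] K)) (hα : ∀ a : A, 0 ≤ a → 0 ≤ α a) (ξ : K) {b : A} (hb : 0 ≤ b)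
    (h : (⟪ξ, α (b ^ 2) ξ⟫).re ≤ 0) : α b ξ = 0 := by
  -- `φ x = ⟪ξ, α x ξ⟫`
  let φ : A →ₗ[ℂ] ℂ :=
    ((innerSL ℂ ξ).comp (ContinuousLinearMap.apply ℂ K ξ)).toLinearMap ∘ₗ α
  have hφ (x : A) (hx : 0 ≤ x) : 0 ≤ φ x :=
    ((ContinuousLinearMap.nonneg_iff_isPositive _).mp (hα x hx)).inner_nonneg_right ξ
  have hre : (φ b).re = 0 := by
    have hcs := sq_re_apply_le_re_apply_one_mul_re_apply_sq φ hφ hb.isSelfAdjoint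
    have hone := (Complex.nonneg_iff.mp (hφ 1 zero_le_one)).1
    have : (φ b).re ^ 2 ≤ 0 := hcs.trans (mul_nonpos_of_nonneg_of_nonpos hone h)
    exact pow_eq_zero_iff two_ne_zero |>.mp (le_antisymm this (sq_nonneg _))
  have him : (φ b).im = 0 := ((Complex.nonneg_iff.mp (hφ b hb)).2).symm
  exact ContinuousLinearMap.apply_eq_zero_of_inner_apply_self_eq_zero (hα b hb)
    (Complex.ext hre him)

end PositiveMap

theorem stmt4_general
    {A : Type*} [NormedRing A] [StarRing A] [CStarRing A] [NormedAlgebra ℂ A]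
    [CompleteSpace A] [PartialOrder A] [StarOrderedRing A] [StarModule ℂ A]
    {K : Type*} [NormedAddCommGroup K] [InnerProductSpace ℂ K] [CompleteSpace K]
    (α : A →ₗ[ℂ] (K →L[ℂ] K))
    (h_pos : ∀ a : A, 0 ≤ a → 0 ≤ α a)
    (ξ : K) (a : A) (ha : IsSelfAdjoint a)
    (h : ⟪ξ, (α (a ^ 2)) ξ⟫ = 0) :
    (α a) ξ = 0 := by
  let _ : CStarAlgebra A := { }
  have hsq : a ^ 2 = a⁺ ^ 2 + a⁻ ^ 2 := by
    conv_lhs => rw [← CFC.posPart_sub_negPart a ha]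
    exact sq_sub_eq_sq_add_sq_of_mul_eq_zero (CFC.posPart_mul_negPart a)
      (CFC.negPart_mul_posPart a)
  have hsq_nonneg (b : A) (hb : 0 ≤ b) : 0 ≤ (⟪ξ, α (b ^ 2) ξ⟫).re :=
    ((ContinuousLinearMap.nonneg_iff_isPositive _).mp
      (h_pos _ hb.isSelfAdjoint.sq_nonneg)).re_inner_nonneg_right ξ
  have hsum : (⟪ξ, α (a⁺ ^ 2) ξ⟫).re + (⟪ξ, α (a⁻ ^ 2) ξ⟫).re = 0 := by
    rw [← Complex.add_re, ← inner_add_right, ← add_apply, ← map_add, ← hsq,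
      h, Complex.zero_re]
  have hpos := hsq_nonneg _ (CFC.posPart_nonneg a)
  have hneg := hsq_nonneg _ (CFC.negPart_nonneg a)
  have hpos_zero := map_apply_eq_zero_of_re_inner_map_sq_nonpos α h_pos ξ
    (CFC.posPart_nonneg a) (by linarith)
  have hneg_zero := map_apply_eq_zero_of_re_inner_map_sq_nonpos α h_pos ξ
    (CFC.negPart_nonneg a) (by linarith)
  rw [← CFC.posPart_sub_negPart a ha, map_sub, sub_apply, hpos_zero, hneg_zero, sub_zero]

/-- If `α : A → B(K)` is a unital positive map, `a` is self-adjoint and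
`⟨ξ, α(a²)ξ⟩ = 0`, then `α(a)ξ = 0`. -/
theorem stmt4
    {A : Type*} [NormedRing A] [StarRing A] [CStarRing A] [NormedAlgebra ℂ A]
    [CompleteSpace A] [PartialOrder A] [StarOrderedRing A] [StarModule ℂ A]
    {K : Type*} [NormedAddCommGroup K] [InnerProductSpace ℂ K] [CompleteSpace K]
    (α : A →ₗ[ℂ] (K →L[ℂ] K))
    (h_unital : α 1 = 1)
    (h_pos : ∀ a : A, 0 ≤ a → 0 ≤ α a)
    (ξ : K) (a : A) (ha : IsSelfAdjoint a)
    (h : ⟪ξ, (α (a ^ 2)) ξ⟫ = 0) :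
    (α a) ξ = 0 :=
  stmt4_general α h_pos ξ a ha h
end

section
/- Let A be a unital C*-algebra, K a complex Hilbert space, α : A → B(K) a unital positive linear map, and ξ ∈ K. If a ∈ A satisfies ⟨ξ, α(a*a)ξ⟩ = 0 and ⟨ξ, α(aa*)ξ⟩ = 0, then α(a)ξ = 0. -/
/-!
The vector functional `f x = ⟪ξ, α x ξ⟫` is a positive linear functional on `A`. By the
Cauchy–Schwarz inequality for its GNS semi-inner product `⟪x, y⟫ = f (star x * y)`, every `y`
with `f (star y * y) = 0` lies in its left kernel: `f (x * y) = 0` for all `x`. The hypotheses put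
`a` and `star a` in this left ideal, hence also `ℜ a` and `ℑ a`. For a self-adjoint `b` in it,
`b⁺ * b⁺ = b⁺ * b`, so `b⁺` is in it too and `f b⁺ = f (1 * b⁺) = 0`; as `α b⁺ ≥ 0` this forces
`α b⁺ ξ = 0`. The same holds for `b⁻ = (-b)⁺`, so `α b ξ = 0`, and `a = ℜ a + I • ℑ a`.
-/

open scoped ComplexInnerProductSpace ComplexOrder ComplexStarModule

section LeftKernel

variable {A M F : Type*} [NonUnitalCStarAlgebra A] [AddCommGroup M] [Module ℂ M]
  [FunLike F A M] [LinearMapClass F ℂ A M] {f : F} {a : A}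

lemma map_mul_realPart_eq_zero_of_forall_map_mul_eq_zero (h : ∀ x, f (x * a) = 0)
    (h_star : ∀ x, f (x * star a) = 0) (x : A) : f (x * ℜ a) = 0 := by
  rw [realPart_apply_coe, mul_smul_comm, LinearMapClass.map_smul_of_tower, mul_add, map_add,
    h, h_star, add_zero, smul_zero]

lemma map_mul_imaginaryPart_eq_zero_of_forall_map_mul_eq_zero (h : ∀ x, f (x * a) = 0)
    (h_star : ∀ x, f (x * star a) = 0) (x : A) : f (x * ℑ a) = 0 := by
  rw [imaginaryPart_apply_coe, mul_smul_comm, mul_smul_comm, map_smul,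
    LinearMapClass.map_smul_of_tower, mul_sub, map_sub, h, h_star, sub_zero, smul_zero,
    smul_zero]

end LeftKernel

namespace ContinuousLinearMap

variable {K : Type*} [NormedAddCommGroup K] [InnerProductSpace ℂ K] [CompleteSpace K]

noncomputable def vectorFunctional (ξ : K) : (K →L[ℂ] K) →ₚ[ℂ] ℂ :=
  .mk₀ ((innerSL ℂ ξ).toLinearMap ∘ₗ (apply ℂ K ξ).toLinearMap) fun _ hT ↦
    ((nonneg_iff_isPositive _).mp hT).inner_nonneg_right ξ

lemma apply_eq_zero_of_nonneg_of_inner_eq_zero {T : K →L[ℂ] K} (hT : 0 ≤ T) {ξ : K}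
    (h : ⟪ξ, T ξ⟫ = 0) : T ξ = 0 := by
  obtain ⟨S, rfl⟩ := CStarAlgebra.nonneg_iff_eq_star_mul_self.mp hT
  rw [mul_def, comp_apply, star_eq_adjoint, adjoint_inner_right, inner_self_eq_zero] at h
  rw [mul_def, comp_apply, h, map_zero]

end ContinuousLinearMap

namespace PositiveLinearMap

lemma map_mul_eq_zero_of_map_star_mul_self_eq_zero {A : Type*} [NonUnitalCStarAlgebra A]
    [PartialOrder A] [StarOrderedRing A] (f : A →ₚ[ℂ] ℂ) {y : A} (hy : f (star y * y) = 0)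
    (x : A) : f (x * y) = 0 := by
  have hnorm : ‖f.toPreGNS y‖ = 0 := by
    have := f.preGNS_norm_sq (f.toPreGNS y)
    rw [ofPreGNS_toPreGNS, hy] at this
    exact_mod_cast pow_eq_zero_iff two_ne_zero |>.mp this
  have := norm_inner_le_norm (𝕜 := ℂ) (f.toPreGNS (star x)) (f.toPreGNS y)
  rw [hnorm, mul_zero, norm_le_zero_iff, preGNS_inner_def] at this
  simpa using this

variable {A : Type*} [CStarAlgebra A] [PartialOrder A] [StarOrderedRing A]

lemma map_posPart_eq_zero_of_forall_map_mul_eq_zero (f : A →ₚ[ℂ] ℂ) {b : A}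
    (hb : IsSelfAdjoint b) (h : ∀ x, f (x * b) = 0) : f b⁺ = 0 := by
  have hsq : star b⁺ * b⁺ = b⁺ * b :=
    calc star b⁺ * b⁺ = b⁺ * (b⁺ - b⁻) := by
          rw [(CFC.posPart_nonneg b).isSelfAdjoint.star_eq, mul_sub, CFC.posPart_mul_negPart,
            sub_zero]
      _ = b⁺ * b := by rw [CFC.posPart_sub_negPart b hb]
  simpa using f.map_mul_eq_zero_of_map_star_mul_self_eq_zero (by rw [hsq, h]) 1

open ContinuousLinearMap in
lemma apply_apply_eq_zero_of_forall_map_mul_eq_zero {K : Type*} [NormedAddCommGroup K]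
    [InnerProductSpace ℂ K] [CompleteSpace K] (α : A →ₚ[ℂ] (K →L[ℂ] K)) (ξ : K) {b : A}
    (hb : IsSelfAdjoint b) (h : ∀ x, (vectorFunctional ξ).comp α (x * b) = 0) :
    α b ξ = 0 := by
  set f := (vectorFunctional ξ).comp α
  have h_neg : ∀ x, f (x * -b) = 0 := fun x ↦ by rw [mul_neg, map_neg, h, neg_zero]
  have h_posPart : f b⁺ = 0 := f.map_posPart_eq_zero_of_forall_map_mul_eq_zero hb h
  have h_negPart : f b⁻ = 0 := by
    rw [← CFC.posPart_neg]
    exact f.map_posPart_eq_zero_of_forall_map_mul_eq_zero hb.neg h_neg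
  rw [← CFC.posPart_sub_negPart b hb, map_sub, sub_apply,
    apply_eq_zero_of_nonneg_of_inner_eq_zero (α.map_nonneg (CFC.posPart_nonneg b)) h_posPart,
    apply_eq_zero_of_nonneg_of_inner_eq_zero (α.map_nonneg (CFC.negPart_nonneg b)) h_negPart,
    sub_zero]

end PositiveLinearMap

open ContinuousLinearMap in
theorem stmt6_general
    {A : Type*} [NormedRing A] [StarRing A] [CStarRing A] [NormedAlgebra ℂ A]
    [CompleteSpace A] [PartialOrder A] [StarOrderedRing A] [StarModule ℂ A]
    {K : Type*} [NormedAddCommGroup K] [InnerProductSpace ℂ K] [CompleteSpace K]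
    (α : A →ₗ[ℂ] (K →L[ℂ] K))
    (h_pos : ∀ a : A, 0 ≤ a → 0 ≤ α a)
    (ξ : K) (a : A)
    (h1 : ⟪ξ, (α (star a * a)) ξ⟫ = 0)
    (h2 : ⟪ξ, (α (a * star a)) ξ⟫ = 0) :
    (α a) ξ = 0 := by
  let _ : CStarAlgebra A := { }
  let α' : A →ₚ[ℂ] (K →L[ℂ] K) := .mk₀ α h_pos
  let f := (vectorFunctional ξ).comp α'
  have h_left : ∀ x, f (x * a) = 0 := f.map_mul_eq_zero_of_map_star_mul_self_eq_zero h1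
  have h_right : ∀ x, f (x * star a) = 0 :=
    f.map_mul_eq_zero_of_map_star_mul_self_eq_zero (by rw [star_star]; exact h2)
  have h_re : α (ℜ a) ξ = 0 := α'.apply_apply_eq_zero_of_forall_map_mul_eq_zero ξ (ℜ a).2
    (map_mul_realPart_eq_zero_of_forall_map_mul_eq_zero h_left h_right)
  have h_im : α (ℑ a) ξ = 0 := α'.apply_apply_eq_zero_of_forall_map_mul_eq_zero ξ (ℑ a).2
    (map_mul_imaginaryPart_eq_zero_of_forall_map_mul_eq_zero h_left h_right)
  rw [← realPart_add_I_smul_imaginaryPart a, map_add, map_smul, add_apply, smul_apply, h_re,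
    h_im, smul_zero, add_zero]

/-- If `α : A → B(K)` is a unital positive map and `⟨ξ, α(a*a)ξ⟩ = 0 = ⟨ξ, α(aa*)ξ⟩`,
then `α(a)ξ = 0`. -/
theorem stmt6
    {A : Type*} [NormedRing A] [StarRing A] [CStarRing A] [NormedAlgebra ℂ A]
    [CompleteSpace A] [PartialOrder A] [StarOrderedRing A] [StarModule ℂ A]
    {K : Type*} [NormedAddCommGroup K] [InnerProductSpace ℂ K] [CompleteSpace K]
    (α : A →ₗ[ℂ] (K →L[ℂ] K))
    (h_unital : α 1 = 1)
    (h_pos : ∀ a : A, 0 ≤ a → 0 ≤ α a)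
    (ξ : K) (a : A)
    (h1 : ⟪ξ, (α (star a * a)) ξ⟫ = 0)
    (h2 : ⟪ξ, (α (a * star a)) ξ⟫ = 0) :
    (α a) ξ = 0 :=
  stmt6_general α h_pos ξ a h1 h2
end

section
/- Let φ¹ : Matrix (Fin n) (Fin n) ℂ → ℂ and φ² : Matrix (Fin m) (Fin m) ℂ → ℂ be positive linear functionals (φ(xᴴ * x) is a nonnegative real for all x), and let α : Matrix (Fin n) (Fin n) ℂ → Matrix (Fin n) (Fin n) ℂ be a positive linear map (α maps positive semidefinite matrices to positive semidefinite matrices). Then for every N and all families a : Fin N → Matrix (Fin n) (Fin n) ℂ and b : Fin N → Matrix (Fin m) (Fin m) ℂ, the sum Σ_{k,l ∈ Fin N} φ¹(α((a k)ᴴ * (a l))) · φ²((b k)ᴴ * (b l)) is a nonnegative real number. -/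
open scoped ComplexOrder Matrix

/-!
Compose `φ¹` with `α` to get a positive functional `ψ` on `M_n(ℂ)`. For any positive functional
`ψ` the Gram matrix `(ψ (star (a k) * a l))_{k,l}` is positive semidefinite, so the sum in question
is the sum of all entries of the Hadamard product of two positive semidefinite matrices, which is
nonnegative by the Schur product theorem.
-/

section PositiveFunctional

variable {A : Type*} [Ring A] [StarRing A] [Module ℂ A] [StarModule ℂ A] [IsScalarTower ℂ A A]
  [SMulCommClass ℂ A A] {ψ : A →ₗ[ℂ] ℂ}

def functionalGram {ι : Type*} (ψ : A →ₗ[ℂ] ℂ) (a : ι → A) : Matrix ι ι ℂ :=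
  Matrix.of fun k l => ψ (star (a k) * a l)

/-- Polarization with `x + y` and `x + I • y`. -/
lemma map_star_mul_eq_conj (hψ : ∀ x, 0 ≤ ψ (star x * x)) (x y : A) :
    ψ (star y * x) = starRingEnd ℂ (ψ (star x * y)) := by
  have him (z : A) : (ψ (star z * z)).im = 0 := (Complex.nonneg_iff.mp (hψ z)).2.symm
  have h₁ := him (x + y)
  have h₂ := him (x + Complex.I • y)
  simp only [star_add, star_smul, add_mul, mul_add, smul_mul_assoc, mul_smul_comm, map_add,
    map_smul, Complex.star_def, Complex.conj_I, smul_eq_mul, Complex.add_im, Complex.mul_im,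
    Complex.mul_re, Complex.neg_re, Complex.neg_im, Complex.I_re, Complex.I_im, neg_mul, neg_smul, map_neg,
    him x, him y] at h₁ h₂
  apply Complex.ext <;> simp only [Complex.conj_re, Complex.conj_im] <;> linarith

variable {ι : Type*} [Fintype ι]

lemma star_dotProduct_functionalGram_mulVec (c : ι → ℂ) (a : ι → A) :
    star c ⬝ᵥ (functionalGram ψ a *ᵥ c) = ψ (star (∑ k, c k • a k) * ∑ l, c l • a l) := by
  simp only [star_sum, star_smul, Finset.sum_mul, Finset.mul_sum, smul_mul_assoc, mul_smul_comm,
    map_sum, map_smul, smul_eq_mul, dotProduct, Matrix.mulVec, functionalGram, Matrix.of_apply,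
    Pi.star_apply]
  rw [Finset.sum_comm]
  refine Finset.sum_congr rfl fun k _ => Finset.sum_congr rfl fun l _ => ?_
  ring

lemma posSemidef_functionalGram (hψ : ∀ x, 0 ≤ ψ (star x * x)) (a : ι → A) :
    (functionalGram ψ a).PosSemidef := by
  refine .of_dotProduct_mulVec_nonneg ?_ fun c => ?_
  · ext k l
    exact (map_star_mul_eq_conj hψ (a l) (a k)).symm
  · rw [star_dotProduct_functionalGram_mulVec]
    exact hψ _

end PositiveFunctional

lemma Matrix.PosSemidef.sum_sum_mul_nonneg {ι 𝕜 : Type*} [Fintype ι] [RCLike 𝕜]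
    {M G : Matrix ι ι 𝕜} (hM : M.PosSemidef) (hG : G.PosSemidef) :
    0 ≤ ∑ k, ∑ l, M k l * G k l := by
  simpa [dotProduct, Matrix.mulVec, Matrix.hadamard] using
    (hM.hadamard hG).dotProduct_mulVec_nonneg fun _ => 1

lemma comp_apply_conjTranspose_mul_self_nonneg {n : Type*} [Fintype n] [DecidableEq n]
    {φ : Matrix n n ℂ →ₗ[ℂ] ℂ} (hφ : ∀ x : Matrix n n ℂ, 0 ≤ φ (xᴴ * x))
    {α : Matrix n n ℂ →ₗ[ℂ] Matrix n n ℂ} (hα : ∀ x : Matrix n n ℂ, x.PosSemidef → (α x).PosSemidef)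
    (x : Matrix n n ℂ) : 0 ≤ (φ ∘ₗ α) (xᴴ * x) := by
  obtain ⟨B, hB⟩ : ∃ B : Matrix n n ℂ, α (xᴴ * x) = star B * B := by
    open scoped MatrixOrder in
    exact CStarAlgebra.nonneg_iff_eq_star_mul_self.mp
      (hα _ (Matrix.posSemidef_conjTranspose_mul_self x)).nonneg
  simpa [hB, Matrix.star_eq_conjTranspose] using hφ B

/-- If `φ¹`, `φ²` are positive linear functionals on matrix algebras and `α` is a positive
linear map on `M_n(ℂ)`, then `Σ_{k,l} φ¹(α((a k)ᴴ (a l))) φ²((b k)ᴴ (b l)) ≥ 0`. -/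
theorem stmt10 {n m : ℕ}
    (φ₁ : Matrix (Fin n) (Fin n) ℂ →ₗ[ℂ] ℂ)
    (φ₂ : Matrix (Fin m) (Fin m) ℂ →ₗ[ℂ] ℂ)
    (hφ₁ : ∀ x : Matrix (Fin n) (Fin n) ℂ, 0 ≤ φ₁ (xᴴ * x))
    (hφ₂ : ∀ x : Matrix (Fin m) (Fin m) ℂ, 0 ≤ φ₂ (xᴴ * x))
    (α : Matrix (Fin n) (Fin n) ℂ →ₗ[ℂ] Matrix (Fin n) (Fin n) ℂ)
    (hα : ∀ x : Matrix (Fin n) (Fin n) ℂ, x.PosSemidef → (α x).PosSemidef)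
    (N : ℕ) (a : Fin N → Matrix (Fin n) (Fin n) ℂ) (b : Fin N → Matrix (Fin m) (Fin m) ℂ) :
    0 ≤ ∑ k : Fin N, ∑ l : Fin N, φ₁ (α ((a k)ᴴ * a l)) * φ₂ ((b k)ᴴ * b l) := by
  have hψ := comp_apply_conjTranspose_mul_self_nonneg hφ₁ hα
  exact (posSemidef_functionalGram (ψ := φ₁ ∘ₗ α) hψ a).sum_sum_mul_nonneg
    (posSemidef_functionalGram hφ₂ b)
end

section
/- Let ρ be a separable state on Matrix (Fin n × Fin m) (Fin n × Fin m) ℂ: there exist a finite index set Fin r, weights λ : Fin r → ℝ with λ i ≥ 0 and Σ λ i = 1, and states σ_i on Matrix (Fin n) (Fin n) ℂ and τ_i on Matrix (Fin m) (Fin m) ℂ such that ρ(A) = Σ_{i} λ i · (σ_i ⊗ τ_i)(A), where (σ_i ⊗ τ_i)(A) is determined by (σ_i ⊗ τ_i)(a ⊗ₖ b) = σ_i(a) τ_i(b) on Kronecker products a ⊗ₖ b. Let α : Matrix (Fin n) (Fin n) ℂ → Matrix (Fin n) (Fin n) ℂ be any positive linear map (mapping positive semidefinite matrices to positive semidefinite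 matrices), and define (α ⊗ id) : Matrix (Fin n × Fin m) (Fin n × Fin m) ℂ → Matrix (Fin n × Fin m) (Fin n × Fin m) ℂ blockwise by ((α ⊗ id)(A)) (j,k) (j',k') = (α (A^{k,k'})) j j', where A^{k,k'} is the n × n matrix with entries (A^{k,k'}) j j' = A (j,k) (j',k'). Then for every positive semidefinite A ∈ Matrix (Fin n × Fin m) (Fin n × Fin m) ℂ, the number ρ((α ⊗ id)(A)) is a nonnegative real; i.e. ρ ∘ (α ⊗ id) is a positive linear functional. -/
open scoped ComplexOrder Matrix Kronecker
open Matrix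

open scoped MatrixOrder Matrix.Norms.L2Operator in
theorem Matrix.posSemidef_iff_eq_transpose_mul_self {ι : Type*} [Fintype ι] [DecidableEq ι]
    {P : Matrix ι ι ℂ} : P.PosSemidef ↔ ∃ B : Matrix ι ι ℂ, P = Bᴴ * B :=
  ⟨fun h => by
    obtain ⟨B, hB⟩ := CStarAlgebra.nonneg_iff_eq_star_mul_self.mp h.nonneg
    exact ⟨B, hB⟩,
   fun ⟨B, hB⟩ => hB ▸ Matrix.posSemidef_conjTranspose_mul_self B⟩

namespace Stmt11Aux

variable {ι κ : Type*} [Fintype ι] [DecidableEq ι] [Fintype κ] [DecidableEq κ]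

lemma funct_eval (ψ : Matrix ι ι ℂ →ₗ[ℂ] ℂ) (x : Matrix ι ι ℂ) :
    ψ x = ∑ j : ι, ∑ j' : ι, x j j' * ψ (single j j' 1) := by
  conv_lhs => rw [matrix_eq_sum_single x]
  rw [map_sum]
  refine Finset.sum_congr rfl fun j _ => ?_
  rw [map_sum]
  refine Finset.sum_congr rfl fun j' _ => ?_
  have h : single j j' (x j j') = (x j j') • single j j' (1:ℂ) := by simp
  rw [h, _root_.map_smul, smul_eq_mul]

lemma funct_posSemidef (ψ : Matrix ι ι ℂ →ₗ[ℂ] ℂ) (hψ : ∀ x, 0 ≤ ψ (xᴴ * x)) :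
    (Matrix.of fun j j' : ι => ψ (single j j' 1)).PosSemidef := by
  set Q : Matrix ι ι ℂ := Matrix.of fun j j' : ι => ψ (single j j' 1) with hQ
  have key : ∀ v : ι → ℂ, 0 ≤ star v ⬝ᵥ Q *ᵥ v := by
    intro v
    cases isEmpty_or_nonempty ι with
    | inl h => simp [dotProduct]
    | inr h =>
      obtain ⟨i0⟩ := h
      set x : Matrix ι ι ℂ := Matrix.of fun a b => if a = i0 then v b else 0 with hx
      have hxx : xᴴ * x = Matrix.of fun j j' => star (v j) * v j' := by
        ext j j'
        simp [Matrix.mul_apply, Matrix.conjTranspose_apply, hx, apply_ite]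
      have h0 := hψ x
      rw [hxx, funct_eval] at h0
      convert h0 using 1
      simp only [dotProduct, mulVec, Matrix.of_apply]
      refine Finset.sum_congr rfl fun j _ => ?_
      rw [Finset.mul_sum]
      refine Finset.sum_congr rfl fun j' _ => ?_
      simp only [hQ, Matrix.of_apply]
      simp only [Pi.star_apply]
      ring
  refine Matrix.PosSemidef.of_dotProduct_mulVec_nonneg ?_ key
  rw [Matrix.isHermitian_iff_isSymmetric, LinearMap.isSymmetric_iff_inner_map_self_real]
  have hreal : ∀ w : ι → ℂ, star (star w ⬝ᵥ Q *ᵥ w) = star w ⬝ᵥ Q *ᵥ w := by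
    intro w
    have h := key w
    have him : (star w ⬝ᵥ Q *ᵥ w).im = 0 := (Complex.le_def.mp h).2.symm
    exact Complex.conj_eq_iff_im.mpr him
  intro v
  obtain ⟨w, rfl⟩ := (WithLp.equiv 2 (ι → ℂ)).symm.surjective v
  rw [show ((WithLp.equiv 2 (ι → ℂ)).symm w) = WithLp.toLp 2 w from rfl, Matrix.toEuclideanLin_toLp,
    EuclideanSpace.inner_toLp_toLp, dotProduct_comm w]
  have e : star ((toLin' Q) w) ⬝ᵥ w = star (star w ⬝ᵥ Q *ᵥ w) := by
    have h1 : (toLin' Q) w = Q *ᵥ w := rfl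
    rw [h1]
    simp [dotProduct, star_sum, mul_comm]
  rw [e]
  simp only [starRingEnd_apply, star_star]
  exact (hreal w).symm

lemma kron_psd {P : Matrix ι ι ℂ} {Q : Matrix κ κ ℂ} (hP : P.PosSemidef) (hQ : Q.PosSemidef) :
    (P ⊗ₖ Q).PosSemidef := by
  obtain ⟨C, rfl⟩ := Matrix.posSemidef_iff_eq_transpose_mul_self.mp hP
  obtain ⟨D, rfl⟩ := Matrix.posSemidef_iff_eq_transpose_mul_self.mp hQ
  rw [Matrix.mul_kronecker_mul]
  have e : Cᴴ ⊗ₖ Dᴴ = (C ⊗ₖ D)ᴴ := by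
    ext ⟨a,b⟩ ⟨c,d⟩
    simp [Matrix.conjTranspose_apply, Matrix.kroneckerMap_apply]
  rw [e]
  exact Matrix.posSemidef_conjTranspose_mul_self _

lemma pair_nonneg {A M : Matrix ι ι ℂ} (hA : A.PosSemidef) (hM : M.PosSemidef) :
    0 ≤ ∑ p : ι, ∑ q : ι, A p q * M p q := by
  have h1 : ∑ p : ι, ∑ q : ι, A p q * M p q = (A * Mᵀ).trace := by
    simp [Matrix.trace, Matrix.mul_apply, Matrix.diag]
  rw [h1]
  obtain ⟨B, rfl⟩ := Matrix.posSemidef_iff_eq_transpose_mul_self.mp hA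
  rw [Matrix.mul_assoc, Matrix.trace_mul_comm]
  have hpsd : ((B * Mᵀ) * Bᴴ).PosSemidef := hM.transpose.mul_mul_conjTranspose_same B
  rw [Matrix.trace]
  refine Finset.sum_nonneg fun i _ => ?_
  have h2 := hpsd.dotProduct_mulVec_nonneg (Pi.single i 1)
  simpa [dotProduct, Matrix.mulVec, Pi.single_apply, Matrix.diag] using h2

end Stmt11Aux

/-- A separable state `ρ` on `M_n(ℂ) ⊗ M_m(ℂ)` (realized as
`Matrix (Fin n × Fin m) (Fin n × Fin m) ℂ` via the Kronecker product) stays positive under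
the partial application `α ⊗ id` of an arbitrary positive linear map `α` on `M_n(ℂ)`:
for every positive semidefinite `A`, `ρ((α ⊗ id)(A)) ≥ 0`.  Here `(α ⊗ id)` acts blockwise:
`((α ⊗ id) A) (j,k) (j',k') = (α (A^{k,k'})) j j'` with `(A^{k,k'}) j j' = A (j,k) (j',k')`. -/
theorem stmt11 {n m : ℕ}
    (ρ : Matrix (Fin n × Fin m) (Fin n × Fin m) ℂ →ₗ[ℂ] ℂ)
    -- separability of the state ρ:
    (h_sep : ∃ (r : ℕ) (lam : Fin r → ℝ)
        (σ : Fin r → (Matrix (Fin n) (Fin n) ℂ →ₗ[ℂ] ℂ))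
        (τ : Fin r → (Matrix (Fin m) (Fin m) ℂ →ₗ[ℂ] ℂ)),
      (∀ i, 0 ≤ lam i) ∧ (∑ i, lam i) = 1 ∧
      (∀ i, σ i 1 = 1) ∧ (∀ i, ∀ x : Matrix (Fin n) (Fin n) ℂ, 0 ≤ σ i (xᴴ * x)) ∧
      (∀ i, τ i 1 = 1) ∧ (∀ i, ∀ x : Matrix (Fin m) (Fin m) ℂ, 0 ≤ τ i (xᴴ * x)) ∧
      ∀ (a : Matrix (Fin n) (Fin n) ℂ) (b : Matrix (Fin m) (Fin m) ℂ),
        ρ (a ⊗ₖ b) = ∑ i, (lam i : ℂ) * (σ i a * τ i b))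
    (α : Matrix (Fin n) (Fin n) ℂ →ₗ[ℂ] Matrix (Fin n) (Fin n) ℂ)
    (hα : ∀ x : Matrix (Fin n) (Fin n) ℂ, x.PosSemidef → (α x).PosSemidef)
    (A : Matrix (Fin n × Fin m) (Fin n × Fin m) ℂ) (hA : A.PosSemidef) :
    0 ≤ ρ (Matrix.of fun p q : Fin n × Fin m =>
      (α (Matrix.of fun j j' : Fin n => A (j, p.2) (j', q.2))) p.1 q.1) := by
  classical
  obtain ⟨r, lam, σ, τ, hlam, _hsum, _hσ1, hσpos, _hτ1, hτpos, hmul⟩ := h_sep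
  open Matrix in
  set Ablk : Fin m → Fin m → Matrix (Fin n) (Fin n) ℂ :=
    fun k k' => Matrix.of fun j j' : Fin n => A (j, k) (j', k') with hAblk
  have hB : (Matrix.of fun p q : Fin n × Fin m =>
      (α (Matrix.of fun j j' : Fin n => A (j, p.2) (j', q.2))) p.1 q.1)
      = ∑ k : Fin m, ∑ k' : Fin m, (α (Ablk k k')) ⊗ₖ Matrix.single k k' (1:ℂ) := by
    ext ⟨j, l⟩ ⟨j', l'⟩
    simp only [Matrix.sum_apply, Matrix.kroneckerMap_apply, Matrix.single,
      Matrix.of_apply, mul_ite, mul_one, mul_zero]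
    rw [Finset.sum_comm]
    simp [ite_and, Finset.sum_ite_eq', hAblk]
  rw [hB]
  have hρ : ∀ k k' : Fin m, ρ ((α (Ablk k k')) ⊗ₖ Matrix.single k k' (1:ℂ))
      = ∑ i, (lam i : ℂ) * (σ i (α (Ablk k k')) * τ i (Matrix.single k k' 1)) :=
    fun k k' => hmul _ _
  calc (0:ℂ) ≤ ∑ i, (lam i : ℂ) *
        (∑ k : Fin m, ∑ k' : Fin m, σ i (α (Ablk k k')) * τ i (Matrix.single k k' 1)) := by
        refine Finset.sum_nonneg fun i _ => ?_
        refine mul_nonneg (by exact_mod_cast hlam i) ?_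
        -- positivity of the i-th term
        set φ : Matrix (Fin n) (Fin n) ℂ →ₗ[ℂ] ℂ := (σ i).comp α with hφdef
        have hφ : ∀ x : Matrix (Fin n) (Fin n) ℂ, 0 ≤ φ (xᴴ * x) := by
          intro x
          have h1 : (α (xᴴ * x)).PosSemidef := hα _ (Matrix.posSemidef_conjTranspose_mul_self x)
          obtain ⟨y, hy⟩ := Matrix.posSemidef_iff_eq_transpose_mul_self.mp h1
          simp only [hφdef, LinearMap.comp_apply, hy]
          exact hσpos i y
        set P : Matrix (Fin n) (Fin n) ℂ :=
          Matrix.of fun j j' => φ (Matrix.single j j' 1) with hP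
        set Q : Matrix (Fin m) (Fin m) ℂ :=
          Matrix.of fun k k' => τ i (Matrix.single k k' 1) with hQ
        have hMpsd : ((P ⊗ₖ Q)).PosSemidef :=
          Stmt11Aux.kron_psd (Stmt11Aux.funct_posSemidef φ hφ)
            (Stmt11Aux.funct_posSemidef (τ i) (hτpos i))
        have hpair := Stmt11Aux.pair_nonneg hA hMpsd
        have hφval : ∀ k k', σ i (α (Ablk k k'))
            = ∑ j : Fin n, ∑ j' : Fin n, A (j, k) (j', k') * P j j' := by
          intro k k'
          have := Stmt11Aux.funct_eval φ (Ablk k k')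
          simpa [hφdef, hAblk, hP] using this
        calc (0:ℂ)
            ≤ ∑ p : Fin n × Fin m, ∑ q : Fin n × Fin m, A p q * ((P ⊗ₖ Q) p q) := hpair
          _ = ∑ j : Fin n, ∑ k : Fin m, ∑ j' : Fin n, ∑ k' : Fin m,
                A (j, k) (j', k') * (P j j' * Q k k') := by
              rw [Fintype.sum_prod_type]
              refine Finset.sum_congr rfl fun j _ => Finset.sum_congr rfl fun k _ => ?_
              rw [Fintype.sum_prod_type]
              exact Finset.sum_congr rfl fun j' _ => Finset.sum_congr rfl fun k' _ => rfl
          _ = ∑ k : Fin m, ∑ j : Fin n, ∑ j' : Fin n, ∑ k' : Fin m,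
                A (j, k) (j', k') * (P j j' * Q k k') := Finset.sum_comm
          _ = ∑ k : Fin m, ∑ j : Fin n, ∑ k' : Fin m, ∑ j' : Fin n,
                A (j, k) (j', k') * (P j j' * Q k k') :=
              Finset.sum_congr rfl fun k _ => Finset.sum_congr rfl fun j _ => Finset.sum_comm
          _ = ∑ k : Fin m, ∑ k' : Fin m, ∑ j : Fin n, ∑ j' : Fin n,
                A (j, k) (j', k') * (P j j' * Q k k') :=
              Finset.sum_congr rfl fun k _ => Finset.sum_comm
          _ = ∑ k : Fin m, ∑ k' : Fin m,
                σ i (α (Ablk k k')) * τ i (Matrix.single k k' 1) := by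
              refine Finset.sum_congr rfl fun k _ => Finset.sum_congr rfl fun k' _ => ?_
              rw [hφval k k', Finset.sum_mul]
              refine Finset.sum_congr rfl fun j _ => ?_
              rw [Finset.sum_mul]
              refine Finset.sum_congr rfl fun j' _ => ?_
              have : Q k k' = τ i (Matrix.single k k' 1) := rfl
              rw [← this]; ring
    _ = ∑ k : Fin m, ∑ k' : Fin m, ρ ((α (Ablk k k')) ⊗ₖ Matrix.single k k' (1:ℂ)) := by
        refine Eq.symm ?_
        calc ∑ k : Fin m, ∑ k' : Fin m, ρ ((α (Ablk k k')) ⊗ₖ Matrix.single k k' (1:ℂ))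
            = ∑ k : Fin m, ∑ k' : Fin m, ∑ i, (lam i : ℂ) *
                (σ i (α (Ablk k k')) * τ i (Matrix.single k k' 1)) := by
              refine Finset.sum_congr rfl fun k _ => Finset.sum_congr rfl fun k' _ => hρ k k'
          _ = ∑ i, (lam i : ℂ) * (∑ k : Fin m, ∑ k' : Fin m,
                σ i (α (Ablk k k')) * τ i (Matrix.single k k' 1)) := by
              simp only [Finset.mul_sum]
              trans (∑ k : Fin m, ∑ i, ∑ k' : Fin m, (lam i : ℂ) *
                (σ i (α (Ablk k k')) * τ i (Matrix.single k k' 1)))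
              · exact Finset.sum_congr rfl fun k _ => Finset.sum_comm
              · exact Finset.sum_comm
    _ = ρ (∑ k : Fin m, ∑ k' : Fin m, (α (Ablk k k')) ⊗ₖ Matrix.single k k' (1:ℂ)) := by
        rw [map_sum]
        exact Finset.sum_congr rfl fun k _ => (map_sum ρ _ _).symm
end
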